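/- arXiv:2104.10050 — 7 statements merged into one kernel-verified Lean document; each statement's English description precedes it below -/
import Mathlib

section
/- Let K be a field and G a torsion-free group. Then every unit lying in the center of the group algebra K[G] is of the form λ·g for some nonzero scalar λ ∈ K and some group element g ∈ G. -/
open scoped commutatorElement

/-- A commutator is unchanged after multiplying the entries by central elements. -/
private lemma comm_central_aux {H : Type*} [Group H] (a b z w : H)
    (hz : z ∈ Subgroup.center H) (hw : w ∈ Subgroup.center H) :
    ⁅a * z, b * w⁆ = ⁅a, b⁆ := by
  have h1 : z * (b * w) * z⁻¹ = b * w := by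
    rw [← Subgroup.mem_center_iff.mp hz (b * w)]; group
  have h2 : w * a⁻¹ * w⁻¹ = a⁻¹ := by
    rw [← Subgroup.mem_center_iff.mp hw a⁻¹]; group
  rw [commutatorElement_def, commutatorElement_def]
  calc a * z * (b * w) * (a * z)⁻¹ * (b * w)⁻¹
      = a * (z * (b * w) * z⁻¹) * a⁻¹ * (b * w)⁻¹ := by group
    _ = a * (b * w) * a⁻¹ * (b * w)⁻¹ := by rw [h1]
    _ = a * b * (w * a⁻¹ * w⁻¹) * b⁻¹ := by group
    _ = a * b * a⁻¹ * b⁻¹ := by rw [h2]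

/-- Schur-type: if the center has finite index then the set of commutators is finite. -/
private lemma finite_commutatorSet_aux (H : Type*) [Group H]
    [(Subgroup.center H).FiniteIndex] : Finite (commutatorSet H) := by
  have hsub : commutatorSet H ⊆
      Set.range (fun p : (H ⧸ Subgroup.center H) × (H ⧸ Subgroup.center H) =>
        ⁅p.1.out, p.2.out⁆) := by
    rintro - ⟨a, b, rfl⟩
    refine ⟨(QuotientGroup.mk a, QuotientGroup.mk b), ?_⟩
    obtain ⟨z, hz⟩ := QuotientGroup.mk_out_eq_mul (Subgroup.center H) a
    obtain ⟨w, hw⟩ := QuotientGroup.mk_out_eq_mul (Subgroup.center H) b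
    simp only
    rw [hz, hw, comm_central_aux a b z w z.2 w.2]
  exact ((Set.finite_range _).subset hsub).to_subtype

/-- A finitely generated, commutative, torsion-free group has unique products. -/
private lemma uniqueProds_aux (H : Type*) [Group H]
    (hc : ∀ a b : H, a * b = b * a)
    (htf : ∀ h : H, IsOfFinOrder h → h = 1) (hfg : Group.FG H) : UniqueProds H := by
  letI : CommGroup H := { ‹Group H› with mul_comm := hc }
  haveI : AddGroup.FG (Additive H) := GroupFG.iff_add_fg.mp hfg
  haveI : Module.Finite ℤ (Additive H) := Module.Finite.iff_addGroup_fg.mpr ‹_›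
  haveI : NoZeroSMulDivisors ℤ (Additive H) := by
    constructor
    intro c a hca
    by_contra hne
    push_neg at hne
    obtain ⟨hc0, ha0⟩ := hne
    have h1 : (Additive.toMul a) ^ c = 1 := by
      have := congrArg Additive.toMul hca
      rwa [toMul_zsmul] at this
    have hfo : IsOfFinOrder (Additive.toMul a) :=
      isOfFinOrder_iff_zpow_eq_one.mpr ⟨c, hc0, h1⟩
    exact ha0 (htf _ hfo)
  haveI : Module.Free ℤ (Additive H) := Module.free_of_finite_type_torsion_free'
  have b := Module.Free.chooseBasis ℤ (Additive H)
  haveI : UniqueSums (Additive H) :=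
    UniqueSums.of_injective_addHom b.repr.toAddMonoidHom.toAddHom b.repr.injective inferInstance
  exact { uniqueMul_of_nonempty := fun hA hB =>
    UniqueSums.uniqueAdd_of_nonempty (G := Additive H) hA hB }

/-- In a group algebra over a field of a group with two unique products,
one-sided units are trivial. -/
private lemma trivial_unit_aux {K : Type*} [Field K] {H : Type*} [Group H]
    [TwoUniqueProds H] {f g : MonoidAlgebra K H} (hfg : f * g = 1) :
    ∃ (l : K) (a : H), l ≠ 0 ∧ f = MonoidAlgebra.single a l := by
  classical
  have happ : ∀ (p q : MonoidAlgebra K H), p = q → ∀ a : H, p.coeff a = q.coeff a :=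
    fun p q h a => by rw [h]
  have hf : f ≠ 0 := by
    rintro rfl
    rw [zero_mul] at hfg
    have := happ _ _ hfg 1
    rw [MonoidAlgebra.one_def] at this
    simp at this
  have hg : g ≠ 0 := by
    rintro rfl
    rw [mul_zero] at hfg
    have := happ _ _ hfg 1
    rw [MonoidAlgebra.one_def] at this
    simp at this
  have hfs : f.coeff.support.Nonempty :=
    Finsupp.support_nonempty_iff.mpr (mt MonoidAlgebra.coeff_eq_zero.mp hf)
  have hgs : g.coeff.support.Nonempty :=
    Finsupp.support_nonempty_iff.mpr (mt MonoidAlgebra.coeff_eq_zero.mp hg)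
  by_cases hcard : 1 < f.coeff.support.card * g.coeff.support.card
  · exfalso
    obtain ⟨p, hp, q, hq, hne, hup, huq⟩ := TwoUniqueProds.uniqueMul_of_one_lt_card hcard
    rw [Finset.mem_product] at hp hq
    have key : ∀ r : H × H, r.1 ∈ f.coeff.support → r.2 ∈ g.coeff.support →
        UniqueMul f.coeff.support g.coeff.support r.1 r.2 → r.1 * r.2 = 1 := by
      intro r h1 h2 hu
      have hmul : (f * g).coeff (r.1 * r.2) = f.coeff r.1 * g.coeff r.2 :=
        MonoidAlgebra.coeff_mul_mul_of_uniqueMul hu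
      by_contra hne1
      rw [hfg, MonoidAlgebra.one_def, MonoidAlgebra.coeff_single, Finsupp.single_apply,
        if_neg (fun h => hne1 h.symm)] at hmul
      exact mul_ne_zero (Finsupp.mem_support_iff.mp h1)
        (Finsupp.mem_support_iff.mp h2) hmul.symm
    have hppq : p.1 * p.2 ≠ q.1 * q.2 := by
      intro e
      exact hne (Prod.ext (huq hp.1 hp.2 e).1 (huq hp.1 hp.2 e).2)
    exact hppq ((key p hp.1 hp.2 hup).trans (key q hq.1 hq.2 huq).symm)
  · push_neg at hcard
    have h1 : 1 ≤ f.coeff.support.card := hfs.card_pos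
    have h2 : 1 ≤ g.coeff.support.card := hgs.card_pos
    have heq : f.coeff.support.card * g.coeff.support.card = 1 :=
      le_antisymm hcard (Nat.one_le_iff_ne_zero.mpr (Nat.mul_ne_zero (by omega) (by omega)))
    have hf1 : f.coeff.support.card = 1 := Nat.dvd_one.mp ⟨_, heq.symm⟩
    obtain ⟨a, l, hl, hfa⟩ := Finsupp.card_support_eq_one'.mp hf1
    exact ⟨l, a, hl, MonoidAlgebra.coeff_injective hfa⟩

/-- An element of the group algebra supported in a subgroup comes from that subgroup. -/
private lemma exists_preimage_aux {K : Type*} [Semiring K] {G : Type*} [Group G]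
    (H : Subgroup G) (x : MonoidAlgebra K G) (hs : ∀ g ∈ x.coeff.support, g ∈ H) :
    ∃ x' : MonoidAlgebra K H, MonoidAlgebra.mapDomain Subtype.val x' = x := by
  classical
  refine ⟨MonoidAlgebra.ofCoeff (Finsupp.subtypeDomain (· ∈ H) x.coeff), ?_⟩
  ext g
  show Finsupp.mapDomain Subtype.val (Finsupp.subtypeDomain (· ∈ H) x.coeff) g = x.coeff g
  by_cases hg : g ∈ H
  · have h1 : (Finsupp.mapDomain Subtype.val (Finsupp.subtypeDomain (· ∈ H) x.coeff))
        ((⟨g, hg⟩ : H) : G) = x.coeff g := by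
      rw [Finsupp.mapDomain_apply Subtype.val_injective]
      rfl
    exact h1
  · rw [Finsupp.mapDomain_notin_range]
    · exact (Finsupp.notMem_support_iff.mp (fun hgs => hg (hs g hgs))).symm
    · rintro ⟨⟨a, ha⟩, rfl⟩
      exact hg ha

/-- Let K be a field and G a torsion-free group. Then every unit lying in the center of the
group algebra K[G] is of the form λ·g for some nonzero λ ∈ K and g ∈ G. -/
theorem central_unit_trivial (K : Type*) [Field K] (G : Type*) [Group G]
    (htf : ∀ g : G, IsOfFinOrder g → g = 1)
    (x : MonoidAlgebra K G) (hx : x ∈ Set.center (MonoidAlgebra K G)) (hu : IsUnit x) :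
    ∃ (l : K) (g : G), l ≠ 0 ∧ x = MonoidAlgebra.single g l := by
  classical
  obtain ⟨u, rfl⟩ := hu
  set x : MonoidAlgebra K G := (u : MonoidAlgebra K G) with hxdef
  set y : MonoidAlgebra K G := ((u⁻¹ : (MonoidAlgebra K G)ˣ) : MonoidAlgebra K G) with hydef
  have hxy : x * y = 1 := u.mul_inv
  have hyx : y * x = 1 := u.inv_mul
  have hxc : ∀ a, a * x = x * a := Semigroup.mem_center_iff.mp hx
  have hyc : ∀ a, a * y = y * a := by
    intro a
    have : y * a = a * y := by
      calc y * a = y * a * (x * y) := by rw [hxy, mul_one]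
        _ = y * (a * x) * y := by noncomm_ring
        _ = y * (x * a) * y := by rw [← hxc a]
        _ = (y * x) * (a * y) := by noncomm_ring
        _ = a * y := by rw [hyx, one_mul]
    exact this.symm
  have hconj : ∀ z : MonoidAlgebra K G, (∀ a, a * z = z * a) →
      ∀ g c : G, z.coeff (g * c * g⁻¹) = z.coeff c := by
    intro z hzc g c
    have happ : ∀ (p q : MonoidAlgebra K G), p = q → ∀ a : G, p.coeff a = q.coeff a :=
      fun p q hpq a => by rw [hpq]
    have h := happ _ _ (hzc (MonoidAlgebra.single g 1)) (g * c)
    rw [MonoidAlgebra.coeff_single_mul_apply, MonoidAlgebra.coeff_mul_single_apply, one_mul, mul_one,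
      inv_mul_cancel_left] at h
    exact h.symm
  set S : Finset G := x.coeff.support ∪ y.coeff.support with hSdef
  set H : Subgroup G := Subgroup.closure (S : Set G) with hHdef
  -- each element of S has finite conjugacy class, so its centralizer has finite index
  have horb : ∀ s ∈ S, (Subgroup.centralizer {s}).FiniteIndex := by
    intro s hs
    have horbsub : MulAction.orbit (ConjAct G) s ⊆ (S : Set G) := by
      rintro - ⟨g, rfl⟩
      show g • s ∈ (S : Set G)
      rw [Finset.mem_coe, ConjAct.smul_def]
      rcases Finset.mem_union.mp hs with h | h
      · refine Finset.mem_union_left _ ?_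
        rw [Finsupp.mem_support_iff] at h ⊢
        rwa [hconj x hxc]
      · refine Finset.mem_union_right _ ?_
        rw [Finsupp.mem_support_iff] at h ⊢
        rwa [hconj y hyc]
    have hfin : (MulAction.orbit (ConjAct G) s).Finite := S.finite_toSet.subset horbsub
    have hne : (MulAction.orbit (ConjAct G) s).Nonempty := ⟨s, MulAction.mem_orbit_self s⟩
    have hidx : (MulAction.stabilizer (ConjAct G) s).index ≠ 0 := by
      rw [MulAction.index_stabilizer]
      exact Nat.pos_iff_ne_zero.mp ((Set.ncard_pos hfin).mpr hne)
    rw [Subgroup.centralizer_eq_comap_stabilizer]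
    constructor
    exact (Subgroup.index_comap_of_surjective _ (f := (ConjAct.toConjAct : G ≃* ConjAct G).toMonoidHom)
      ConjAct.toConjAct.surjective).trans_ne hidx
  -- the center of H has finite index in H
  haveI hcfi : (Subgroup.center ↥H).FiniteIndex := by
    set C : Subgroup G := ⨅ s ∈ S, Subgroup.centralizer {s} with hCdef
    haveI : C.FiniteIndex := Subgroup.finiteIndex_iInf' (fun s : G => Subgroup.centralizer {s}) horb
    haveI : (C.subgroupOf H).FiniteIndex := Subgroup.instFiniteIndex_subgroupOf C H
    refine Subgroup.finiteIndex_of_le (H := C.subgroupOf H) ?_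
    intro t ht
    rw [Subgroup.mem_subgroupOf] at ht
    have hSc : ∀ s ∈ (S : Set G), s * (t : G) = (t : G) * s := by
      intro s hsS
      have h1 : (t : G) ∈ Subgroup.centralizer {s} := by
        have := (Subgroup.mem_iInf.mp ht) s
        exact (Subgroup.mem_iInf.mp this) hsS
      exact Subgroup.mem_centralizer_iff.mp h1 s rfl
    have hle : H ≤ Subgroup.centralizer {(t : G)} := by
      show Subgroup.closure (S : Set G) ≤ Subgroup.centralizer {(t : G)}
      rw [Subgroup.closure_le]
      intro s hsS
      rw [SetLike.mem_coe, Subgroup.mem_centralizer_iff]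
      intro h hh
      rw [Set.mem_singleton_iff] at hh
      subst hh
      exact (hSc s hsS).symm
    rw [Subgroup.mem_center_iff]
    intro u
    have := Subgroup.mem_centralizer_iff.mp (hle u.2) (t : G) rfl
    exact Subtype.ext (by rw [Subgroup.coe_mul, Subgroup.coe_mul]; exact this.symm)
  haveI hcs : Finite (commutatorSet ↥H) := finite_commutatorSet_aux ↥H
  haveI : Finite (_root_.commutator ↥H) := inferInstance
  -- torsion-freeness of H
  have hHtf : ∀ h : ↥H, IsOfFinOrder h → h = 1 := by
    intro h hh
    have : IsOfFinOrder ((h : G)) := H.subtype.isOfFinOrder hh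
    exact Subtype.ext (htf _ this)
  -- commutativity of H
  have hc : ∀ a b : ↥H, a * b = b * a := by
    intro a b
    rw [← commutatorElement_eq_one_iff_mul_comm]
    have hmem : ⁅a, b⁆ ∈ _root_.commutator ↥H :=
      Subgroup.commutator_mem_commutator (Subgroup.mem_top a) (Subgroup.mem_top b)
    have h1 : IsOfFinOrder (⟨⁅a, b⁆, hmem⟩ : _root_.commutator ↥H) :=
      isOfFinOrder_of_finite _
    have h2 : IsOfFinOrder ⁅a, b⁆ := (_root_.commutator ↥H).subtype.isOfFinOrder h1
    exact hHtf _ h2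
  have hfg : Group.FG ↥H :=
    (Group.fg_iff_subgroup_fg H).mpr ((Subgroup.fg_iff H).mpr ⟨S, rfl, S.finite_toSet⟩)
  haveI : UniqueProds ↥H := uniqueProds_aux ↥H hc hHtf hfg
  haveI : TwoUniqueProds ↥H := UniqueProds.toTwoUniqueProds_of_group
  -- transfer x and y to the group algebra of H
  obtain ⟨x', hx'⟩ := exists_preimage_aux H x
    (fun g hg => Subgroup.subset_closure (Finset.mem_union_left _ hg))
  obtain ⟨y', hy'⟩ := exists_preimage_aux H y
    (fun g hg => Subgroup.subset_closure (Finset.mem_union_right _ hg))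
  have hinj : Function.Injective (MonoidAlgebra.mapDomainRingHom K H.subtype) := by
    intro a b hab
    exact MonoidAlgebra.mapDomain_injective Subtype.val_injective hab
  have hx'' : (MonoidAlgebra.mapDomainRingHom K H.subtype) x' = x := by
    rw [MonoidAlgebra.mapDomainRingHom_apply]
    exact hx'
  have hy'' : (MonoidAlgebra.mapDomainRingHom K H.subtype) y' = y := by
    rw [MonoidAlgebra.mapDomainRingHom_apply]
    exact hy'
  have hxy' : x' * y' = 1 := by
    apply hinj
    rw [map_mul, map_one, hx'', hy'', hxy]
  obtain ⟨l, a, hl, hfa⟩ := trivial_unit_aux hxy'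
  refine ⟨l, (a : G), hl, ?_⟩
  rw [← hx', hfa]
  exact MonoidAlgebra.mapDomain_single
end

section
/- Every torsion-free FC-group is abelian. That is, if G is a group in which the identity is the only element of finite order, and every element of G has only finitely many conjugates in G, then G is commutative. -/
open Subgroup MulAction
open scoped commutatorElement

/-- In an FC-group, centralizers of cyclic subgroups have finite index. -/
lemma aux_centralizer_finiteIndex {G : Type*} [Group G]
    (hfc : ∀ g : G, {h : G | ∃ a : G, a * g * a⁻¹ = h}.Finite) (g : G) :
    (Subgroup.centralizer (Subgroup.zpowers g : Set G)).FiniteIndex := by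
  have horb : (MulAction.orbit (ConjAct G) g).Finite := by
    refine (hfc g).subset ?_
    rintro _ ⟨a, rfl⟩
    exact ⟨ConjAct.ofConjAct a, (ConjAct.smul_def a g).symm⟩
  have : Finite (MulAction.orbit (ConjAct G) g) := horb
  have e : G ⧸ Subgroup.centralizer (Subgroup.zpowers g : Set G) ≃
      MulAction.orbit (ConjAct G) g :=
    ((MulAction.orbitEquivQuotientStabilizer (ConjAct G) g).trans
      (Subgroup.quotientEquivOfEq (show @Eq (Subgroup G) (MulAction.stabilizer (ConjAct G) g)
          (Subgroup.centralizer (Subgroup.zpowers g : Set G)) by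
        refine Subgroup.ext fun x => ?_
        rw [MulAction.mem_stabilizer_iff, ConjAct.smul_def]
        change _ ↔ ConjAct.ofConjAct x ∈ Subgroup.centralizer (Subgroup.zpowers g : Set G)
        generalize ConjAct.ofConjAct x = x
        rw [Subgroup.mem_centralizer_iff]
        constructor
        · intro h
          have h' : g * x = x * g := by rw [← mul_inv_eq_iff_eq_mul.mp h]
          rintro _ ⟨n, rfl⟩
          exact (Commute.zpow_left h' n).eq
        · intro h
          rw [← h g (Subgroup.mem_zpowers g)]
          group))).symm
  have : Finite (G ⧸ Subgroup.centralizer (Subgroup.zpowers g : Set G)) := Finite.of_equiv _ e.symm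
  exact Subgroup.finiteIndex_of_finite_quotient

lemma aux_commutator_central {H : Type*} [Group H] {a b z w : H}
    (hz : z ∈ Subgroup.center H) (hw : w ∈ Subgroup.center H) :
    ⁅a * z, b * w⁆ = ⁅a, b⁆ := by
  rw [Subgroup.mem_center_iff] at hz hw
  have cz : ∀ g : H, Commute z g := fun g => (hz g).symm
  have cw : ∀ g : H, Commute w g := fun g => (hw g).symm
  simp only [commutatorElement_def, mul_inv_rev]
  calc a * z * (b * w) * (z⁻¹ * a⁻¹) * (w⁻¹ * b⁻¹)
      = a * (z * b) * (z⁻¹ * w) * a⁻¹ * w⁻¹ * b⁻¹ := by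
        rw [((cz w).inv_left).eq]; group
    _ = a * (b * z) * (z⁻¹ * w) * a⁻¹ * w⁻¹ * b⁻¹ := by rw [(cz b).eq]
    _ = a * b * (w * a⁻¹) * w⁻¹ * b⁻¹ := by group
    _ = a * b * (a⁻¹ * w) * w⁻¹ * b⁻¹ := by rw [(cw a⁻¹).eq]
    _ = a * b * a⁻¹ * b⁻¹ := by group

/-- If the center has finite index, the set of commutators is finite. -/
lemma aux_finite_commutatorSet {H : Type*} [Group H]
    [(Subgroup.center H).FiniteIndex] : Finite (commutatorSet H) := by
  have : Finite (H ⧸ Subgroup.center H) := inferInstance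
  have hsub : commutatorSet H ⊆ Set.range
      (fun p : (H ⧸ Subgroup.center H) × (H ⧸ Subgroup.center H) =>
        ⁅p.1.out, p.2.out⁆) := by
    rintro _ ⟨x, y, rfl⟩
    refine ⟨(QuotientGroup.mk x, QuotientGroup.mk y), ?_⟩
    have hx : x⁻¹ * (QuotientGroup.mk x : H ⧸ Subgroup.center H).out ∈ Subgroup.center H :=
      QuotientGroup.eq.mp (QuotientGroup.out_eq' _).symm
    have hy : y⁻¹ * (QuotientGroup.mk y : H ⧸ Subgroup.center H).out ∈ Subgroup.center H :=
      QuotientGroup.eq.mp (QuotientGroup.out_eq' _).symm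
    have ex : (QuotientGroup.mk x : H ⧸ Subgroup.center H).out
        = x * (x⁻¹ * (QuotientGroup.mk x : H ⧸ Subgroup.center H).out) := by group
    have ey : (QuotientGroup.mk y : H ⧸ Subgroup.center H).out
        = y * (y⁻¹ * (QuotientGroup.mk y : H ⧸ Subgroup.center H).out) := by group
    show ⁅(QuotientGroup.mk x : H ⧸ Subgroup.center H).out,
        (QuotientGroup.mk y : H ⧸ Subgroup.center H).out⁆ = ⁅x, y⁆
    rw [ex, ey]
    exact aux_commutator_central hx hy
  exact Set.Finite.subset (Set.finite_range _) hsub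

/-- Every torsion-free FC-group is abelian. -/
theorem torsionFree_FC_group_abelian (G : Type*) [Group G]
    (htf : ∀ g : G, IsOfFinOrder g → g = 1)
    (hfc : ∀ g : G, {h : G | ∃ a : G, a * g * a⁻¹ = h}.Finite) :
    ∀ a b : G, a * b = b * a := by
  intro a b
  set H : Subgroup G := Subgroup.closure {a, b} with hH
  have haH : a ∈ H := Subgroup.subset_closure (by simp)
  have hbH : b ∈ H := Subgroup.subset_closure (by simp)
  set a' : H := ⟨a, haH⟩
  set b' : H := ⟨b, hbH⟩
  have hca := aux_centralizer_finiteIndex hfc a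
  have hcb := aux_centralizer_finiteIndex hfc b
  set K : Subgroup G :=
    Subgroup.centralizer (Subgroup.zpowers a : Set G) ⊓
      Subgroup.centralizer (Subgroup.zpowers b : Set G) with hK
  haveI : K.FiniteIndex := inferInstance
  haveI : (K.subgroupOf H).FiniteIndex := Subgroup.instFiniteIndex_subgroupOf K H
  -- K ∩ H is contained in the center of H
  have hle : K.subgroupOf H ≤ Subgroup.center H := by
    intro x hx
    rw [Subgroup.mem_subgroupOf] at hx
    obtain ⟨hx1, hx2⟩ := hx
    have hax : a * (x : G) = (x : G) * a :=
      Subgroup.mem_centralizer_iff.mp hx1 a (Subgroup.mem_zpowers a)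
    have hbx : b * (x : G) = (x : G) * b :=
      Subgroup.mem_centralizer_iff.mp hx2 b (Subgroup.mem_zpowers b)
    rw [Subgroup.mem_center_iff]
    intro y
    have hyc : (y : G) ∈ Subgroup.centralizer {(x : G)} := by
      have hyH : (y : G) ∈ Subgroup.closure {a, b} := y.2
      refine (Subgroup.closure_le (Subgroup.centralizer {(x : G)})).mpr ?_ hyH
      rintro g (rfl | rfl)
      · exact Subgroup.mem_centralizer_iff.mpr (by rintro c rfl; exact hax.symm)
      · exact Subgroup.mem_centralizer_iff.mpr (by rintro c rfl; exact hbx.symm)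
    have := Subgroup.mem_centralizer_iff.mp hyc (x : G) rfl
    exact Subtype.ext this.symm
  haveI : (Subgroup.center H).FiniteIndex := Subgroup.finiteIndex_of_le hle
  haveI : Finite (commutatorSet H) := aux_finite_commutatorSet
  haveI : Finite (_root_.commutator H) := inferInstance
  have hmem : ⁅a', b'⁆ ∈ _root_.commutator H :=
    Subgroup.commutator_mem_commutator (Subgroup.mem_top _) (Subgroup.mem_top _)
  have hfin : IsOfFinOrder (⁅a', b'⁆ : H) := by
    have h1 : IsOfFinOrder (⟨⁅a', b'⁆, hmem⟩ : _root_.commutator H) := isOfFinOrder_of_finite _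
    exact (Subgroup.subtype _).isOfFinOrder h1
  have hfinG : IsOfFinOrder (⁅a, b⁆ : G) := by
    have h2 := H.subtype.isOfFinOrder hfin
    have he : (H.subtype ⁅a', b'⁆ : G) = ⁅a, b⁆ := by
      simp [commutatorElement_def, a', b']
    rwa [he] at h2
  have h1 : ⁅a, b⁆ = (1 : G) := htf _ hfinG
  rw [commutatorElement_eq_one_iff_mul_comm] at h1
  exact h1
end

section
/- Let K be a field, G a group, and x an element of the center of the group algebra K[G]. Then the subgroup H_x of G generated by the support Supp(x) is an FC-group; more precisely, every element of H_x has only finitely many conjugates in G (hence also in H_x). -/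
/-- If x is central in K[G], then every element of the subgroup generated by the support of x
has only finitely many conjugates in G. -/
theorem central_support_closure_FC (K : Type*) [Field K] (G : Type*) [Group G]
    (x : MonoidAlgebra K G) (hx : x ∈ Set.center (MonoidAlgebra K G)) :
    ∀ g ∈ Subgroup.closure (x.coeff.support : Set G),
      {h : G | ∃ a : G, a * g * a⁻¹ = h}.Finite := by
  have hconj : ∀ g ∈ x.coeff.support, ∀ a : G, a * g * a⁻¹ ∈ x.coeff.support := by
    intro g hg a
    have hcomm : MonoidAlgebra.single a 1 * x = x * MonoidAlgebra.single a 1 :=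
      ((Set.mem_center_iff.mp hx).comm (MonoidAlgebra.single a 1)).symm
    have := congrArg (fun f : MonoidAlgebra K G => f.coeff (a * g)) hcomm
    simp only [MonoidAlgebra.coeff_single_mul_apply, MonoidAlgebra.coeff_mul_single_apply] at this
    simp only [one_mul, mul_one, inv_mul_cancel_left] at this
    rw [Finsupp.mem_support_iff] at hg ⊢
    rwa [← this]
  intro g hg
  induction hg using Subgroup.closure_induction with
  | mem g hg =>
      exact (x.coeff.support.finite_toSet).subset (by
        rintro h ⟨a, rfl⟩; exact hconj g hg a)
  | one =>
      refine (Set.finite_singleton (1 : G)).subset ?_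
      rintro h ⟨a, rfl⟩; simp
  | mul g₁ g₂ _ _ h1 h2 =>
      refine ((h1.prod h2).image (fun p => p.1 * p.2)).subset ?_
      rintro h ⟨a, rfl⟩
      exact ⟨(a * g₁ * a⁻¹, a * g₂ * a⁻¹), ⟨⟨a, rfl⟩, ⟨a, rfl⟩⟩, by group⟩
  | inv g _ h1 =>
      refine (h1.image (·⁻¹)).subset ?_
      rintro h ⟨a, rfl⟩
      exact ⟨a * g * a⁻¹, ⟨a, rfl⟩, by group⟩
end

section
/- Let K be a field, G a group, H a subgroup of G, and let ι : K[H] → K[G] be the K-algebra embedding induced by the inclusion H ↪ G. For x ∈ K[H]: x has a left inverse in K[H] if and only if ι(x) has a left inverse in K[G]; and likewise x has a right inverse in K[H] if and only if ι(x) has a right inverse in K[G]. -/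
section Aux

variable {K : Type*} [Field K] {G : Type*} [Group G] (H : Subgroup G)
  [DecidablePred (· ∈ H)]

private noncomputable def ιKH : MonoidAlgebra K H →ₐ[K] MonoidAlgebra K G :=
  MonoidAlgebra.mapDomainAlgHom K K H.subtype

private def projH (f : MonoidAlgebra K G) : MonoidAlgebra K G :=
  MonoidAlgebra.ofCoeff (Finsupp.filter (· ∈ H) f.coeff)

private lemma projH_apply_pos {g : G} (h : g ∈ H) (f : MonoidAlgebra K G) :
    (projH H f).coeff g = f.coeff g := Finsupp.filter_apply_pos _ _ h

private lemma projH_apply_neg {g : G} (h : g ∉ H) (f : MonoidAlgebra K G) :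
    (projH H f).coeff g = 0 := Finsupp.filter_apply_neg _ _ h

omit [DecidablePred (· ∈ H)] in
private lemma ιKH_apply (x : MonoidAlgebra K H) :
    (ιKH H x : MonoidAlgebra K G) = MonoidAlgebra.mapDomain H.subtype x := rfl

omit [DecidablePred (· ∈ H)] in
private lemma ιKH_inj : Function.Injective (ιKH (K := K) H) := fun a b hab =>
  MonoidAlgebra.mapDomain_injective Subtype.coe_injective hab

omit [DecidablePred (· ∈ H)] in
private lemma ιKH_single (h : H) (c : K) :
    (ιKH H (MonoidAlgebra.single h c) : MonoidAlgebra K G) =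
      MonoidAlgebra.single (h : G) c := by
  rw [ιKH_apply, MonoidAlgebra.mapDomain_single]; rfl

private lemma filter_mul_single (a : MonoidAlgebra K G) {g : G} (hg : g ∈ H) (c : K) :
    projH H (a * MonoidAlgebra.single g c) = projH H a * MonoidAlgebra.single g c := by
  ext g'
  by_cases h : g' ∈ H
  · rw [projH_apply_pos H h, MonoidAlgebra.coeff_mul_single_apply,
      MonoidAlgebra.coeff_mul_single_apply, projH_apply_pos H (mul_mem h (inv_mem hg))]
  · rw [projH_apply_neg H h, MonoidAlgebra.coeff_mul_single_apply,
      projH_apply_neg H, zero_mul]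
    intro hmem
    exact h (by simpa using mul_mem hmem hg)

private lemma single_mul_filter (a : MonoidAlgebra K G) {g : G} (hg : g ∈ H) (c : K) :
    projH H (MonoidAlgebra.single g c * a) = MonoidAlgebra.single g c * projH H a := by
  ext g'
  by_cases h : g' ∈ H
  · rw [projH_apply_pos H h, MonoidAlgebra.coeff_single_mul_apply,
      MonoidAlgebra.coeff_single_mul_apply, projH_apply_pos H (mul_mem (inv_mem hg) h)]
  · rw [projH_apply_neg H h, MonoidAlgebra.coeff_single_mul_apply,
      projH_apply_neg H, mul_zero]
    intro hmem
    exact h (by simpa using mul_mem hg hmem)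

private lemma projH_zero : projH H (0 : MonoidAlgebra K G) = 0 :=
  congrArg MonoidAlgebra.ofCoeff (Finsupp.filter_zero _)

private lemma projH_add (a b : MonoidAlgebra K G) :
    projH H (a + b) = projH H a + projH H b :=
  congrArg MonoidAlgebra.ofCoeff Finsupp.filter_add

private lemma filter_mul_iota (a : MonoidAlgebra K G) (x : MonoidAlgebra K H) :
    projH H (a * ιKH H x) = projH H a * ιKH H x := by
  induction x using MonoidAlgebra.induction with
  | zero => simp [projH_zero]
  | single_add h c f _ _ ih =>
    rw [map_add, mul_add, mul_add, projH_add, ih, ιKH_single,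
      filter_mul_single H a h.2 c]

private lemma iota_mul_filter (a : MonoidAlgebra K G) (x : MonoidAlgebra K H) :
    projH H (ιKH H x * a) = ιKH H x * projH H a := by
  induction x using MonoidAlgebra.induction with
  | zero => simp [projH_zero]
  | single_add h c f _ _ ih =>
    rw [map_add, add_mul, add_mul, projH_add, ih, ιKH_single,
      single_mul_filter H a h.2 c]

private lemma projH_one : projH H (1 : MonoidAlgebra K G) = 1 := by
  show MonoidAlgebra.ofCoeff (Finsupp.filter (· ∈ H) (Finsupp.single (1 : G) (1 : K))) = _
  exact congrArg MonoidAlgebra.ofCoeff (Finsupp.filter_single_of_pos _ (one_mem H))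

private lemma iota_subtypeDomain (y : MonoidAlgebra K G) :
    (ιKH H (MonoidAlgebra.ofCoeff (Finsupp.subtypeDomain (· ∈ H) y.coeff)) : MonoidAlgebra K G) = projH H y := by
  ext g
  by_cases h : g ∈ H
  · rw [projH_apply_pos H h, ιKH_apply, MonoidAlgebra.coeff_mapDomain]
    have := Finsupp.mapDomain_apply (Subtype.coe_injective (p := (· ∈ H)))
      (Finsupp.subtypeDomain (· ∈ H) y.coeff) ⟨g, h⟩
    simpa using this
  · rw [projH_apply_neg H h, ιKH_apply, MonoidAlgebra.coeff_mapDomain, Finsupp.mapDomain_notin_range]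
    rintro ⟨⟨g', hg'⟩, rfl⟩
    exact h hg'

private theorem helper {K : Type*} [Field K] {G : Type*} [Group G]
    (H : Subgroup G) (x : MonoidAlgebra K H) :
    ((∃ y : MonoidAlgebra K H, y * x = 1) ↔
      (∃ y : MonoidAlgebra K G, y * ιKH H x = 1)) ∧
    ((∃ y : MonoidAlgebra K H, x * y = 1) ↔
      (∃ y : MonoidAlgebra K G, ιKH H x * y = 1)) := by
  classical
  constructor
  · constructor
    · rintro ⟨y, hy⟩
      exact ⟨ιKH H y, by rw [← map_mul, hy, map_one]⟩
    · rintro ⟨y, hy⟩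
      refine ⟨MonoidAlgebra.ofCoeff (Finsupp.subtypeDomain (· ∈ H) y.coeff), ιKH_inj H ?_⟩
      rw [map_mul, map_one, iota_subtypeDomain, ← filter_mul_iota, hy, projH_one]
  · constructor
    · rintro ⟨y, hy⟩
      exact ⟨ιKH H y, by rw [← map_mul, hy, map_one]⟩
    · rintro ⟨y, hy⟩
      refine ⟨MonoidAlgebra.ofCoeff (Finsupp.subtypeDomain (· ∈ H) y.coeff), ιKH_inj H ?_⟩
      rw [map_mul, map_one, iota_subtypeDomain, ← iota_mul_filter, hy, projH_one]

end Aux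

/-- For a subgroup H of G and x ∈ K[H], x is left (resp. right) invertible in K[H] iff its
image in K[G] is left (resp. right) invertible in K[G]. -/
theorem invertible_in_subgroup_algebra_iff (K : Type*) [Field K] (G : Type*) [Group G]
    (H : Subgroup G) (x : MonoidAlgebra K H) :
    ((∃ y : MonoidAlgebra K H, y * x = 1) ↔
      (∃ y : MonoidAlgebra K G, y * (MonoidAlgebra.mapDomainAlgHom K K H.subtype x) = 1)) ∧
    ((∃ y : MonoidAlgebra K H, x * y = 1) ↔
      (∃ y : MonoidAlgebra K G, (MonoidAlgebra.mapDomainAlgHom K K H.subtype x) * y = 1)) :=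
  helper H x
end

section
/- Let K be a field and G a unique product group. Then every unit of the group algebra K[G] is of the form λ·g for some nonzero scalar λ ∈ K and some group element g ∈ G. -/
/-- If G is a unique product group, then every unit of K[G] is of the form λ·g with
λ ∈ K nonzero and g ∈ G. -/
theorem unit_trivial_of_uniqueProds (K : Type*) [Field K] (G : Type*) [Group G]
    [UniqueProds G] (x : MonoidAlgebra K G) (hu : IsUnit x) :
    ∃ (l : K) (g : G), l ≠ 0 ∧ x = MonoidAlgebra.single g l := by
  classical
  have : TwoUniqueProds G := UniqueProds.toTwoUniqueProds_of_group
  obtain ⟨u, rfl⟩ := hu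
  set x : MonoidAlgebra K G := (u : MonoidAlgebra K G)
  set y : MonoidAlgebra K G := ((u⁻¹ : _) : MonoidAlgebra K G)
  have hxy : x * y = 1 := u.mul_inv
  have hx0 : x ≠ 0 := fun h => one_ne_zero (α := MonoidAlgebra K G) (by rw [← hxy, h, zero_mul])
  have hy0 : y ≠ 0 := fun h => one_ne_zero (α := MonoidAlgebra K G) (by rw [← hxy, h, mul_zero])
  have hxs := Finsupp.support_nonempty_iff.mpr (mt MonoidAlgebra.coeff_eq_zero.mp hx0)
  have hys := Finsupp.support_nonempty_iff.mpr (mt MonoidAlgebra.coeff_eq_zero.mp hy0)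
  have hcard : x.coeff.support.card = 1 := by
    by_contra h
    have h2 : 1 < x.coeff.support.card * y.coeff.support.card := by
      have h1 : 1 ≤ x.coeff.support.card := hxs.card_pos
      have h1' : 1 ≤ y.coeff.support.card := hys.card_pos
      nlinarith [Nat.lt_of_le_of_ne h1 (Ne.symm h)]
    obtain ⟨⟨a1, b1⟩, h1, ⟨a2, b2⟩, hm2, hne, hu1, hu2⟩ :=
      TwoUniqueProds.uniqueMul_of_one_lt_card h2
    simp only [Finset.mem_product] at h1 hm2
    have hv1 : (x * y).coeff (a1 * b1) ≠ 0 := by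
      rw [MonoidAlgebra.mul_apply_mul_eq_mul_of_uniqueMul hu1]
      exact mul_ne_zero (Finsupp.mem_support_iff.mp h1.1) (Finsupp.mem_support_iff.mp h1.2)
    have hv2 : (x * y).coeff (a2 * b2) ≠ 0 := by
      rw [MonoidAlgebra.mul_apply_mul_eq_mul_of_uniqueMul hu2]
      exact mul_ne_zero (Finsupp.mem_support_iff.mp hm2.1) (Finsupp.mem_support_iff.mp hm2.2)
    have hprodne : a1 * b1 ≠ a2 * b2 := by
      intro he
      obtain ⟨ha, hb⟩ := hu1 hm2.1 hm2.2 he.symm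
      exact hne (by simp [ha, hb])
    rw [hxy] at hv1 hv2
    have e1 : a1 * b1 = 1 := by
      by_contra hne1
      exact hv1 (by simp [MonoidAlgebra.one_def, MonoidAlgebra.single_apply, Ne.symm hne1])
    have e2 : a2 * b2 = 1 := by
      by_contra hne1
      exact hv2 (by simp [MonoidAlgebra.one_def, MonoidAlgebra.single_apply, Ne.symm hne1])
    exact hprodne (e1.trans e2.symm)
  obtain ⟨g, hg⟩ := Finset.card_eq_one.mp hcard
  refine ⟨x.coeff g, g, Finsupp.mem_support_iff.mp (hg ▸ Finset.mem_singleton_self g), ?_⟩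
  ext a
  rcases eq_or_ne a g with rfl | hne
  · simp [MonoidAlgebra.single_apply]
  · have : a ∉ x.coeff.support := by rw [hg]; simp [hne]
    rw [Finsupp.notMem_support_iff.mp this, MonoidAlgebra.single_apply, if_neg (Ne.symm hne)]
end

section
/- Let K be a field of characteristic zero, let m ≥ 1, and let p = X_1^{k_1} + ⋯ + X_m^{k_m} ∈ K[X_1, …, X_m] be a Brieskorn–Pham polynomial with integer exponents k_i ≥ 2. Then the Jacobian ring Jac_p = K[X_1, …, X_m]/(∂p/∂X_1, …, ∂p/∂X_m) is a finite-dimensional K-vector space of dimension (k_1 − 1)(k_2 − 1)⋯(k_m − 1). -/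
open MvPolynomial

/-- Membership in the ideal generated by pure powers `X i ^ n i` is equivalent to
all coefficients in the "box" vanishing. -/
theorem mem_span_pure_powers {K : Type*} [Field K] {m : ℕ} (n : Fin m → ℕ)
    (q : MvPolynomial (Fin m) K) :
    q ∈ Ideal.span (Set.range fun i => (MvPolynomial.X i : MvPolynomial (Fin m) K) ^ n i) ↔
      ∀ d : Fin m →₀ ℕ, (∀ i, d i < n i) → MvPolynomial.coeff d q = 0 := by
  classical
  constructor
  · intro hq d hd
    rw [Ideal.mem_span_range_iff_exists_fun] at hq
    obtain ⟨f, rfl⟩ := hq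
    rw [MvPolynomial.coeff_sum]
    apply Finset.sum_eq_zero
    intro i _
    rw [X_pow_eq_monomial, coeff_mul_monomial', if_neg]
    intro hle
    exact absurd (Finsupp.single_le_iff.mp hle) (hd i).not_ge
  · intro h
    rw [as_sum q]
    apply Ideal.sum_mem
    intro d hd
    by_cases hdS : ∀ i, d i < n i
    · exact absurd (h d hdS) (MvPolynomial.mem_support_iff.mp hd)
    · push_neg at hdS
      obtain ⟨i, hi⟩ := hdS
      have hrw : (monomial d) (coeff d q) =
          (monomial (d - Finsupp.single i (n i))) (coeff d q) * X i ^ n i := by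
        rw [X_pow_eq_monomial, monomial_mul, mul_one,
          tsub_add_cancel_of_le (Finsupp.single_le_iff.mpr hi)]
      rw [hrw]
      exact Ideal.mul_mem_left _ _ (Ideal.subset_span ⟨i, rfl⟩)


theorem quot_span_pure_powers {K : Type*} [Field K] {m : ℕ} (n : Fin m → ℕ)
    (I : Ideal (MvPolynomial (Fin m) K))
    (hI : I = Ideal.span (Set.range fun i => (MvPolynomial.X i : MvPolynomial (Fin m) K) ^ n i))
    (hmem : ∀ q, q ∈ I ↔ ∀ d : Fin m →₀ ℕ, (∀ i, d i < n i) → MvPolynomial.coeff d q = 0) :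
    Module.Finite K (MvPolynomial (Fin m) K ⧸ I) ∧
      Module.finrank K (MvPolynomial (Fin m) K ⧸ I) = ∏ i, n i := by
  classical
  set S : Set (Fin m →₀ ℕ) := {d | ∀ i, d i < n i} with hS
  have eS : S ≃ (Π i, Fin (n i)) :=
    { toFun := fun d i => ⟨d.1 i, d.2 i⟩
      invFun := fun f => ⟨Finsupp.equivFunOnFinite.symm fun i => (f i : ℕ), fun i => by
        simpa using (f i).2⟩
      left_inv := fun d => by
        apply Subtype.ext
        ext i
        simp
      right_inv := fun f => by
        funext i
        apply Fin.ext
        simp }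
  haveI : Fintype S := Fintype.ofEquiv _ eS.symm
  let B := MvPolynomial.basisMonomials (Fin m) K
  let φ : MvPolynomial (Fin m) K →ₗ[K] (S →₀ K) :=
    (Finsupp.supportedEquivFinsupp S).toLinearMap ∘ₗ
      (Finsupp.restrictDom K K S) ∘ₗ (B.repr : MvPolynomial (Fin m) K →ₗ[K] _)
  have hsurj : Function.Surjective φ := by
    apply (Finsupp.supportedEquivFinsupp S).surjective.comp
    exact (LinearMap.range_eq_top.mp (Finsupp.range_restrictDom S)).comp B.repr.surjective
  have hrepr : ∀ (q : MvPolynomial (Fin m) K) (d : Fin m →₀ ℕ), B.repr q d = coeff d q :=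
    fun q d => rfl
  have hker : LinearMap.ker φ = I.restrictScalars K := by
    ext q
    simp only [LinearMap.mem_ker, Submodule.restrictScalars_mem]
    rw [hmem]
    have : φ q = 0 ↔ (Finsupp.restrictDom K K S) (B.repr q) = 0 := by
      constructor
      · intro h
        apply (Finsupp.supportedEquivFinsupp S).injective
        rw [map_zero]
        exact h
      · intro h
        simp only [φ, LinearMap.comp_apply]
        rw [show (B.repr : MvPolynomial (Fin m) K →ₗ[K] _) q = B.repr q from rfl, h, map_zero]
    rw [this]
    rw [Subtype.ext_iff]
    rw [show ((Finsupp.restrictDom K K S (B.repr q) : Finsupp.supported K K S) : (Fin m →₀ ℕ) →₀ K)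
      = Finsupp.filter (· ∈ S) (B.repr q) from rfl]
    rw [show ((0 : Finsupp.supported K K S) : (Fin m →₀ ℕ) →₀ K) = 0 from rfl]
    rw [Finsupp.filter_eq_zero_iff]
    constructor
    · intro h d hd
      rw [← hrepr q d]
      exact h d hd
    · intro h d hd
      rw [hrepr q d]
      exact h d hd
  let e : (MvPolynomial (Fin m) K ⧸ I) ≃ₗ[K] (S →₀ K) :=
    (Submodule.Quotient.restrictScalarsEquiv K I).symm ≪≫ₗ
      Submodule.quotEquivOfEq _ _ hker.symm ≪≫ₗ φ.quotKerEquivOfSurjective hsurj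
  constructor
  · exact Module.Finite.equiv e.symm
  · rw [e.finrank_eq, Module.finrank_finsupp_self, Fintype.card_congr eS, Fintype.card_pi]
    simp

/-- The Jacobian ring of the Brieskorn–Pham polynomial p = X_1^{k_1} + ⋯ + X_m^{k_m} over a
field of characteristic zero is a finite-dimensional K-vector space of dimension
(k_1 − 1)⋯(k_m − 1). -/
theorem jacobian_ring_brieskorn_pham (K : Type*) [Field K] [CharZero K]
    (m : ℕ) (hm : 1 ≤ m) (k : Fin m → ℕ) (hk : ∀ i, 2 ≤ k i)
    (p : MvPolynomial (Fin m) K) (hp : p = ∑ i, MvPolynomial.X i ^ (k i))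
    (J : Ideal (MvPolynomial (Fin m) K))
    (hJ : J = Ideal.span (Set.range fun i => MvPolynomial.pderiv i p)) :
    Module.Finite K (MvPolynomial (Fin m) K ⧸ J) ∧
      Module.finrank K (MvPolynomial (Fin m) K ⧸ J) = ∏ i, (k i - 1) := by
  classical
  have hpder : ∀ i, MvPolynomial.pderiv i p =
      C ((k i : K)) * X i ^ (k i - 1) := by
    intro i
    rw [hp, map_sum, Finset.sum_eq_single i]
    · rw [pderiv_pow, pderiv_X_self, mul_one]
      rw [show ((k i : MvPolynomial (Fin m) K)) = C ((k i : K)) by simp]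
    · intro j _ hji
      rw [pderiv_pow, pderiv_X_of_ne hji, mul_zero]
    · intro h
      exact absurd (Finset.mem_univ i) h
  have hJI : J = Ideal.span
      (Set.range fun i => (MvPolynomial.X i : MvPolynomial (Fin m) K) ^ (k i - 1)) := by
    rw [hJ]
    apply le_antisymm
    · rw [Ideal.span_le]
      rintro _ ⟨i, rfl⟩
      simp only [hpder i]
      exact Ideal.mul_mem_left _ _ (Ideal.subset_span ⟨i, rfl⟩)
    · rw [Ideal.span_le]
      rintro _ ⟨i, rfl⟩
      have hki : ((k i : K)) ≠ 0 := by
        have := hk i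
        exact_mod_cast (by omega : k i ≠ 0)
      have hx : (MvPolynomial.X i : MvPolynomial (Fin m) K) ^ (k i - 1)
          = C ((k i : K))⁻¹ * MvPolynomial.pderiv i p := by
        rw [hpder i, ← mul_assoc, ← C_mul, inv_mul_cancel₀ hki, C_1, one_mul]
      simp only [hx]
      exact Ideal.mul_mem_left _ _ (Ideal.subset_span ⟨i, rfl⟩)
  rw [hJI]
  exact quot_span_pure_powers (fun i => k i - 1) _ rfl
    (fun q => mem_span_pure_powers (fun i => k i - 1) q)
end

section
/- Let G be a group, H a subgroup of G, and suppose x ∈ K[G] satisfies y·x = 1 for some y ∈ K[G], where K is a field and x has support contained in H. Then π_H(y)·x = 1, where π_H : K[G] → K[G] is the projection retaining only the coefficients indexed by elements of H; in particular x is left invertible by an element supported in H. -/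
open scoped Classical

/-- The K-linear projection π_H : K[G] → K[G] sending ∑_{g∈G} c_g g to ∑_{g∈H} c_g g,
i.e. restriction of coefficients to the subgroup H. -/
noncomputable def projSubgroup {K : Type*} [Field K] {G : Type*} [Group G] (H : Subgroup G)
    (x : MonoidAlgebra K G) : MonoidAlgebra K G :=
  MonoidAlgebra.ofCoeff (Finsupp.filter (· ∈ H) x.coeff)

/-- If x ∈ K[G] has support contained in a subgroup H and y·x = 1 for some y ∈ K[G], then
π_H(y)·x = 1; in particular x is left invertible by an element supported in H. -/
theorem left_inverse_supported_in_subgroup (K : Type*) [Field K] (G : Type*) [Group G]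
    (H : Subgroup G) (x y : MonoidAlgebra K G)
    (hx : (x.coeff.support : Set G) ⊆ (H : Set G)) (hyx : y * x = 1) :
    projSubgroup H y * x = 1 := by
  classical
  set yH : MonoidAlgebra K G := MonoidAlgebra.ofCoeff (Finsupp.filter (· ∈ H) y.coeff) with hyH
  set yC : MonoidAlgebra K G := MonoidAlgebra.ofCoeff (Finsupp.filter (fun g => ¬ g ∈ H) y.coeff) with hyC
  have hsplit : yH + yC = y := MonoidAlgebra.coeff_injective (Finsupp.filter_pos_add_filter_neg y.coeff _)
  -- support facts
  have hH : ∀ z : MonoidAlgebra K G, ((z.coeff.support : Set G) ⊆ (H : Set G)) →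
      ((yH * z).coeff.support : Set G) ⊆ (H : Set G) := by
    intro z hz g hg
    obtain ⟨a, ha, b, hb, rfl⟩ := Finset.mem_mul.1 (MonoidAlgebra.support_coeff_mul_subset yH z hg)
    have haH : a ∈ H := by
      by_contra hnot
      exact Finsupp.mem_support_iff.1 ha (Finsupp.filter_apply_neg _ _ hnot)
    exact H.mul_mem haH (hz hb)
  have hC : ((yC * x).coeff.support : Set G) ⊆ ((H : Set G)ᶜ) := by
    intro g hg
    obtain ⟨a, ha, b, hb, rfl⟩ := Finset.mem_mul.1 (MonoidAlgebra.support_coeff_mul_subset yC x hg)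
    have haC : ¬ a ∈ H := by
      intro hmem
      exact Finsupp.mem_support_iff.1 ha (Finsupp.filter_apply_neg _ _ (by simpa using hmem))
    intro hmem
    exact haC (by simpa using H.mul_mem hmem (H.inv_mem (hx hb)))
  have key : yC * x = 0 := by
    have h1 : yH * x + yC * x = 1 := by rw [← add_mul, hsplit, hyx]
    have h2 : yC * x = 1 - yH * x := eq_sub_of_add_eq' h1
    have hsub : ((1 - yH * x : MonoidAlgebra K G).coeff.support : Set G) ⊆ (H : Set G) := by
      intro g hg
      have := Finsupp.support_sub (f := (1 : MonoidAlgebra K G).coeff) (g := (yH * x).coeff) hg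
      rcases Finset.mem_union.1 this with h | h
      · have : g = 1 := by
          simpa using MonoidAlgebra.support_coeff_one_subset h
        exact this ▸ H.one_mem
      · exact hH x hx h
    ext g
    by_cases hg : g ∈ (yC * x).coeff.support
    · rw [h2] at hg
      exact absurd (hsub hg) (hC (h2 ▸ hg))
    · simpa using Finsupp.notMem_support_iff.1 hg
  have : yH * x + yC * x = 1 := by rw [← add_mul, hsplit, hyx]
  rw [key, add_zero] at this
  simpa [projSubgroup, hyH] using this
end
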